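/- Let Q ∈ {0,1}^{n_a × n_p}, S_i = { j : Q_{ij} = 1 }, θ ∈ ℝ, and s ∈ {0,1}^{n_a}. Define c_j(s) = ⊕_{i : Q_{ij}=1} s_i ∈ {0,1} for j = 1,…,n_p. Then, as linear maps on ℂ^(2^{n_p}): (I_{2^{n_p}} ⊗ ⟨(s_1)_θ| ⊗ ⋯ ⊗ ⟨(s_{n_a})_θ|) ∘ E_Q ∘ (I_{2^{n_p}} ⊗ |+⟩^{⊗n_a}) = 2^{−n_a/2} · (Π_{j=1}^{n_p} Z_j^{c_j(s)}) · Π_{i=1}^{n_a} exp(i·θ·Z_{S_i}). That is, entangling n_a ancillas in |+⟩ according to Q and projecting each ancilla i onto ⟨(s_i)_θ| implements, up to normalization 2^{−n_a/2} and the outcome-dependent Pauli-Z correction determined by c(s), the product of all X-program term unitaries. -/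

import Mathlib

open Matrix Complex

noncomputable section

/-- The single-qubit Pauli-Z matrix `diag(1, -1)`. -/
def qZ : Matrix (ZMod 2) (ZMod 2) ℂ :=
  Matrix.diagonal (fun b => if b = 0 then 1 else -1)

/-- The single-qubit Pauli-X matrix `[[0,1],[1,0]]`. -/
def qX : Matrix (ZMod 2) (ZMod 2) ℂ :=
  Matrix.of fun b c => if b = c then 0 else 1

/-- The single-qubit Hadamard matrix `(1/√2)·[[1,1],[1,-1]]`. -/
def qH : Matrix (ZMod 2) (ZMod 2) ℂ :=
  Matrix.of fun b c => ((Real.sqrt 2 : ℂ))⁻¹ * (-1) ^ (b.val * c.val)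

/-- Kronecker product over `j : Fin n` of single-qubit matrices, as a matrix
on the `n`-qubit space indexed by bitstrings `Fin n → ZMod 2`. -/
def kron {n : ℕ} (M : Fin n → Matrix (ZMod 2) (ZMod 2) ℂ) :
    Matrix (Fin n → ZMod 2) (Fin n → ZMod 2) ℂ :=
  Matrix.of fun p q => ∏ j, M j (p j) (q j)

/-- `Z_S`: Pauli-Z on every qubit in `S`, identity elsewhere. -/
def ZS {n : ℕ} (S : Finset (Fin n)) : Matrix (Fin n → ZMod 2) (Fin n → ZMod 2) ℂ :=
  kron (fun j => if j ∈ S then qZ else 1)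

/-- `X_S`: Pauli-X on every qubit in `S`, identity elsewhere. -/
def XS {n : ℕ} (S : Finset (Fin n)) : Matrix (Fin n → ZMod 2) (Fin n → ZMod 2) ℂ :=
  kron (fun j => if j ∈ S then qX else 1)

/-- `H^{⊗n}`, the `n`-fold Kronecker power of the Hadamard matrix. -/
def HN (n : ℕ) : Matrix (Fin n → ZMod 2) (Fin n → ZMod 2) ℂ :=
  kron (fun _ => qH)

/-- The computational basis state `|p⟩`. -/
def ket {n : ℕ} (p : Fin n → ZMod 2) : (Fin n → ZMod 2) → ℂ :=
  Pi.single p 1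

/-- The parity `π_S(p) = ∑_{j ∈ S} p_j (mod 2)`. -/
def parity {n : ℕ} (S : Finset (Fin n)) (p : Fin n → ZMod 2) : ZMod 2 :=
  ∑ j ∈ S, p j
/-- The single-qubit computational basis state `|b⟩`. -/
def ketb (b : ZMod 2) : ZMod 2 → ℂ := Pi.single b 1

/-- The single-qubit state `|+⟩ = (|0⟩ + |1⟩)/√2`. -/
def bplus : ZMod 2 → ℂ :=
  ((Real.sqrt 2 : ℂ))⁻¹ • (ketb 0 + ketb 1)

/-- The single-qubit state `|−⟩ = (|0⟩ − |1⟩)/√2`. -/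
def bminus : ZMod 2 → ℂ :=
  ((Real.sqrt 2 : ℂ))⁻¹ • (ketb 0 - ketb 1)

/-- Tensor product of an `n`-qubit vector with a single-qubit (ancilla) vector. -/
def tensV {n : ℕ} (v : (Fin n → ZMod 2) → ℂ) (w : ZMod 2 → ℂ) :
    (Fin n → ZMod 2) × ZMod 2 → ℂ :=
  fun x => v x.1 * w x.2

/-- `CZ_S`: the product over `j ∈ S` of controlled-Z gates between qubit `j`
and the `(n+1)`-st (ancilla) qubit. -/
def CZS {n : ℕ} (S : Finset (Fin n)) :
    Matrix ((Fin n → ZMod 2) × ZMod 2) ((Fin n → ZMod 2) × ZMod 2) ℂ :=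
  Matrix.diagonal (fun x => ∏ j ∈ S, (-1 : ℂ) ^ ((x.1 j).val * x.2.val))

/-- The θ-basis state `|s_θ⟩ = (1/√2)(e^{−iθ}|+⟩ + (−1)^s e^{iθ}|−⟩)`. -/
def ketθ (s : ZMod 2) (θ : ℝ) : ZMod 2 → ℂ :=
  ((Real.sqrt 2 : ℂ))⁻¹ •
    (Complex.exp (-(Complex.I * θ)) • bplus +
      ((-1 : ℂ) ^ s.val * Complex.exp (Complex.I * θ)) • bminus)

/-- The map `v ↦ v ⊗ |+⟩` adjoining an ancilla in state `|+⟩`, as a matrix. -/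
def injPlus (n : ℕ) : Matrix ((Fin n → ZMod 2) × ZMod 2) (Fin n → ZMod 2) ℂ :=
  Matrix.of fun x q => (if x.1 = q then 1 else 0) * bplus x.2

/-- The contraction of the ancilla with the bra `⟨s_θ|`, as a matrix. -/
def projθ (n : ℕ) (s : ZMod 2) (θ : ℝ) :
    Matrix (Fin n → ZMod 2) ((Fin n → ZMod 2) × ZMod 2) ℂ :=
  Matrix.of fun q x => (if q = x.1 then 1 else 0) * (starRingEnd ℂ) (ketθ s θ x.2)
/-- `E_Q`: the product over all `(i,j)` with `Q_{ij} = 1` of controlled-Z gates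
between primary qubit `j` and ancilla qubit `i`; it is diagonal with entry
`(−1)^{Σ_{i,j} Q_{ij} p_j a_i}` on the basis state `|p⟩ ⊗ |a⟩`. -/
def EQ {n_a n_p : ℕ} (Q : Matrix (Fin n_a) (Fin n_p) (ZMod 2)) :
    Matrix ((Fin n_p → ZMod 2) × (Fin n_a → ZMod 2))
      ((Fin n_p → ZMod 2) × (Fin n_a → ZMod 2)) ℂ :=
  Matrix.diagonal (fun x =>
    (-1 : ℂ) ^ (∑ i, ∑ j, (Q i j).val * (x.1 j).val * (x.2 i).val))

/-- The map `v ↦ v ⊗ |+⟩^{⊗ n_a}` adjoining `n_a` ancillas in `|+⟩`, as a matrix. -/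
def injPlusN (n_a n_p : ℕ) :
    Matrix ((Fin n_p → ZMod 2) × (Fin n_a → ZMod 2)) (Fin n_p → ZMod 2) ℂ :=
  Matrix.of fun x q => (if x.1 = q then 1 else 0) * ∏ i, bplus (x.2 i)

/-- Contraction of the `n_a` ancillas with the bras `⟨(s_i)_θ|`, as a matrix. -/
def projθN (n_a n_p : ℕ) (s : Fin n_a → ZMod 2) (θ : ℝ) :
    Matrix (Fin n_p → ZMod 2) ((Fin n_p → ZMod 2) × (Fin n_a → ZMod 2)) ℂ :=
  Matrix.of fun q x =>
    (if q = x.1 then 1 else 0) * ∏ i, (starRingEnd ℂ) (ketθ (s i) θ (x.2 i))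

/-!
All three factors are diagonal in the primary register's computational basis. For a fixed
primary basis state `p`, `E_Q` acts on ancilla `i` as `Z^{(Q p)_i}`, so the ancillas decouple
and the contraction factorizes into single-qubit amplitudes
`⟨s_θ| Z^t |+⟩ = 2^{-1/2} (-1)^{s t} e^{iθ (-1)^t}`. The signs multiply to
`(-1)^{s ⬝ Q p} = (-1)^{(s Q) ⬝ p} = (-1)^{c ⬝ p}`, the Pauli-Z correction, while
`e^{iθ (-1)^{(Q p)_i}}` is the diagonal entry of `exp(iθ Z_{S_i})` at `p`.
-/

lemma AddChar.map_sum_eq_prod {ι A M : Type*} [AddCommMonoid A] [CommMonoid M]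
    (ψ : AddChar A M) (s : Finset ι) (f : ι → A) : ψ (∑ i ∈ s, f i) = ∏ i ∈ s, ψ (f i) := by
  induction s using Finset.cons_induction with
  | empty => simp
  | cons a s ha ih => rw [Finset.sum_cons, Finset.prod_cons, ψ.map_add_eq_mul, ih]

def signChar : AddChar (ZMod 2) ℂ where
  toFun t := (-1) ^ t.val
  map_zero_eq_one' := by simp
  map_add_eq_mul' a b := by
    rw [ZMod.val_add, ← neg_one_pow_eq_pow_mod_two, pow_add]

lemma signChar_apply (t : ZMod 2) : signChar t = (-1) ^ t.val := rfl

lemma signChar_natCast (n : ℕ) : signChar n = (-1) ^ n := by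
  rw [signChar_apply, ZMod.val_natCast, ← neg_one_pow_eq_pow_mod_two]

lemma signChar_pow_val (a b : ZMod 2) : signChar a ^ b.val = signChar (b * a) := by
  rw [← AddChar.map_nsmul_eq_pow, nsmul_eq_mul, ZMod.natCast_zmod_val]

lemma kron_diagonal {n : ℕ} (d : Fin n → ZMod 2 → ℂ) :
    kron (fun j => diagonal (d j)) = diagonal (fun p => ∏ j, d j (p j)) := by
  ext p q
  by_cases h : p = q
  · subst h
    simp [kron]
  · rw [diagonal_apply_ne _ h]
    obtain ⟨j, hj⟩ := Function.ne_iff.mp h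
    exact Finset.prod_eq_zero (Finset.mem_univ j) (diagonal_apply_ne _ hj)

lemma Matrix.list_prod_ofFn_diagonal {ι R : Type*} [Fintype ι] [DecidableEq ι] [CommSemiring R]
    {n : ℕ} (d : Fin n → ι → R) :
    (List.ofFn fun i => diagonal (d i)).prod = diagonal (fun x => ∏ i, d i x) := by
  calc (List.ofFn fun i => diagonal (d i)).prod = diagonalRingHom ι R (List.ofFn d).prod := by
        rw [map_list_prod, List.map_ofFn]; rfl
    _ = diagonal (fun x => ∏ i, d i x) := by
        rw [List.prod_ofFn, diagonalRingHom_apply, Finset.prod_fn]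

lemma qZ_eq_diagonal : qZ = diagonal signChar := by
  rw [qZ]
  congr 1
  funext b
  obtain rfl | rfl : b = 0 ∨ b = 1 := by revert b; decide
  · simp
  · simp [signChar_apply, ZMod.val_one]

lemma qZ_pow_val (a : ZMod 2) : qZ ^ a.val = diagonal (fun b => signChar (a * b)) := by
  rw [qZ_eq_diagonal, diagonal_pow]
  congr 1
  funext b
  exact signChar_pow_val b a

lemma ZS_eq_diagonal {n : ℕ} (S : Finset (Fin n)) :
    ZS S = diagonal (fun p => signChar (parity S p)) := by
  have h : (fun j => if j ∈ S then qZ else 1)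
      = fun j => diagonal (fun b => if j ∈ S then signChar b else 1) := by
    funext j
    split_ifs <;> simp [qZ_eq_diagonal, diagonal_one]
  rw [ZS, h, kron_diagonal]
  congr 1
  funext p
  rw [Finset.prod_ite_mem, Finset.univ_inter, parity, AddChar.map_sum_eq_prod]

lemma exp_smul_ZS {n : ℕ} (S : Finset (Fin n)) (θ : ℝ) :
    NormedSpace.exp ((I * θ) • ZS S)
      = diagonal (fun p => Complex.exp (I * θ * signChar (parity S p))) := by
  rw [ZS_eq_diagonal, ← diagonal_smul, exp_diagonal]
  congr 1
  funext p
  rw [Pi.coe_exp, Pi.smul_apply, smul_eq_mul, ← Complex.exp_eq_exp_ℂ]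

lemma parity_eq_dotProduct {n : ℕ} {S : Finset (Fin n)} {q : Fin n → ZMod 2}
    (hS : ∀ j, j ∈ S ↔ q j = 1) (p : Fin n → ZMod 2) : parity S p = q ⬝ᵥ p := by
  have hq : ∀ j, q j = if j ∈ S then 1 else 0 := by
    have bit : ∀ b : ZMod 2, b = if b = 1 then 1 else 0 := by decide
    intro j
    simp only [hS]
    exact bit _
  simp [parity, dotProduct, hq, Finset.sum_ite_mem]

lemma bplus_apply (b : ZMod 2) : bplus b = (Real.sqrt 2 : ℂ)⁻¹ := by
  obtain rfl | rfl : b = 0 ∨ b = 1 := by revert b; decide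
  all_goals simp [bplus, ketb]

lemma bminus_apply (b : ZMod 2) : bminus b = (Real.sqrt 2 : ℂ)⁻¹ * signChar b := by
  obtain rfl | rfl : b = 0 ∨ b = 1 := by revert b; decide
  all_goals simp [bminus, ketb, signChar_apply, ZMod.val_one]

lemma inv_sqrt_two_mul_self : (Real.sqrt 2 : ℂ)⁻¹ * (Real.sqrt 2 : ℂ)⁻¹ = 2⁻¹ := by
  rw [← mul_inv, ← Complex.ofReal_mul, Real.mul_self_sqrt zero_le_two, Complex.ofReal_ofNat]

lemma sum_zmod_two {M : Type*} [AddCommMonoid M] (f : ZMod 2 → M) : ∑ b, f b = f 0 + f 1 :=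
  Fin.sum_univ_two f

lemma star_bplus_dotProduct_bplus : star bplus ⬝ᵥ bplus = 1 := by
  simp [dotProduct, bplus_apply, inv_sqrt_two_mul_self]

lemma star_bminus_dotProduct_bplus : star bminus ⬝ᵥ bplus = 0 := by
  simp [dotProduct, bplus_apply, bminus_apply, sum_zmod_two, signChar_apply, ZMod.val_one]

lemma star_bplus_dotProduct_bminus : star bplus ⬝ᵥ bminus = 0 := by
  simp [dotProduct, bplus_apply, bminus_apply, sum_zmod_two, signChar_apply, ZMod.val_one]

lemma star_bminus_dotProduct_bminus : star bminus ⬝ᵥ bminus = 1 := by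
  simp [dotProduct, bminus_apply, sum_zmod_two, signChar_apply, ZMod.val_one,
    inv_sqrt_two_mul_self]
  norm_num

lemma star_ketθ_dotProduct_bplus (s : ZMod 2) (θ : ℝ) :
    star (ketθ s θ) ⬝ᵥ bplus = (Real.sqrt 2 : ℂ)⁻¹ * Complex.exp (I * θ) := by
  simp [ketθ, star_smul, add_dotProduct, smul_dotProduct, star_bplus_dotProduct_bplus,
    star_bminus_dotProduct_bplus, ← Complex.exp_conj]

lemma star_ketθ_dotProduct_bminus (s : ZMod 2) (θ : ℝ) :
    star (ketθ s θ) ⬝ᵥ bminus = (Real.sqrt 2 : ℂ)⁻¹ * (signChar s * Complex.exp (-(I * θ))) := by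
  simp [ketθ, star_smul, add_dotProduct, smul_dotProduct, star_bplus_dotProduct_bminus,
    star_bminus_dotProduct_bminus, ← Complex.exp_conj, signChar_apply]

lemma signChar_one : signChar 1 = -1 := by simp [signChar_apply, ZMod.val_one]

lemma star_ketθ_dotProduct_signChar_mul_bplus (s t : ZMod 2) (θ : ℝ) :
    star (ketθ s θ) ⬝ᵥ (fun b => signChar (t * b) * bplus b)
      = (Real.sqrt 2 : ℂ)⁻¹ * (signChar (s * t) * Complex.exp (I * θ * signChar t)) := by
  obtain rfl | rfl : t = 0 ∨ t = 1 := by revert t; decide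
  · simp only [zero_mul, mul_zero, AddChar.map_zero_eq_one, one_mul, mul_one,
      star_ketθ_dotProduct_bplus]
  · have hminus : (fun b => signChar b * bplus b) = bminus := by
      funext b; simp [bplus_apply, bminus_apply, mul_comm]
    simp only [one_mul, mul_one, hminus, star_ketθ_dotProduct_bminus, signChar_one, mul_neg_one]

lemma EQ_eq_diagonal {n_a n_p : ℕ} (Q : Matrix (Fin n_a) (Fin n_p) (ZMod 2)) :
    EQ Q = diagonal (fun x => ∏ i, signChar ((Q *ᵥ x.1) i * x.2 i)) := by
  rw [EQ]
  congr 1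
  funext x
  rw [← signChar_natCast]
  push_cast
  simp only [ZMod.natCast_val, ZMod.cast_id', id, mulVec, dotProduct, Finset.sum_mul,
    AddChar.map_sum_eq_prod]

lemma projθN_mul_diagonal_mul_injPlusN {n_a n_p : ℕ} (s : Fin n_a → ZMod 2) (θ : ℝ)
    (d : Fin n_a → (Fin n_p → ZMod 2) → ZMod 2 → ℂ) :
    projθN n_a n_p s θ * diagonal (fun x : (Fin n_p → ZMod 2) × (Fin n_a → ZMod 2) =>
        ∏ i, d i x.1 (x.2 i)) * injPlusN n_a n_p
      = diagonal (fun p => ∏ i, star (ketθ (s i) θ) ⬝ᵥ (fun b => d i p b * bplus b)) := by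
  ext q p
  rw [mul_apply]
  simp only [mul_diagonal, projθN, injPlusN, of_apply, Fintype.sum_prod_type, diagonal_apply]
  simp only [ite_mul, one_mul, zero_mul, Finset.sum_ite_irrel, Finset.sum_const_zero,
    Finset.sum_ite_eq, Finset.mem_univ, if_true]
  by_cases hqp : q = p
  · simp only [hqp, if_true, dotProduct, Fintype.prod_sum]
    refine Finset.sum_congr rfl fun a _ => ?_
    simp only [Pi.star_apply, Complex.star_def, Finset.prod_mul_distrib, mul_assoc]
  · simp [hqp]

/-- Entangling `n_a` ancillas in `|+⟩` according to `Q` and projecting ancilla `i`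
onto `⟨(s_i)_θ|` implements, up to normalization `2^{−n_a/2}` and the
outcome-dependent Pauli-Z correction `∏_j Z_j^{c_j(s)}`, the product of all
X-program term unitaries `∏_i exp(iθ Z_{S_i})`. -/
theorem stmt_9 (n_a n_p : ℕ) (Q : Matrix (Fin n_a) (Fin n_p) (ZMod 2)) (θ : ℝ)
    (S : Fin n_a → Finset (Fin n_p)) (hS : ∀ i j, j ∈ S i ↔ Q i j = 1)
    (s : Fin n_a → ZMod 2) (c : Fin n_p → ZMod 2)
    (hc : ∀ j, c j = ∑ i, Q i j * s i) :
    projθN n_a n_p s θ * EQ Q * injPlusN n_a n_p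
      = (((Real.sqrt 2 : ℂ))⁻¹ ^ n_a) •
          (kron (fun j => qZ ^ (c j).val) *
            (List.ofFn
              (fun i => NormedSpace.exp ((Complex.I * (θ : ℂ)) • ZS (S i)))).prod) := by
  have hpar : ∀ i p, parity (S i) p = (Q *ᵥ p) i := fun i => parity_eq_dotProduct (hS i)
  have hcQ : c = s ᵥ* Q := by
    funext j
    simp only [hc, vecMul, dotProduct, mul_comm]
  rw [EQ_eq_diagonal,
    projθN_mul_diagonal_mul_injPlusN s θ (fun i p b => signChar ((Q *ᵥ p) i * b))]
  simp only [star_ketθ_dotProduct_signChar_mul_bplus, qZ_pow_val, kron_diagonal, exp_smul_ZS,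
    hpar, list_prod_ofFn_diagonal, diagonal_mul_diagonal, ← diagonal_smul]
  congr 1
  funext p
  have hsum : ∑ i, s i * (Q *ᵥ p) i = ∑ j, c j * p j := by
    rw [hcQ]
    exact dotProduct_mulVec s Q p
  rw [Pi.smul_apply, smul_eq_mul, Finset.prod_mul_distrib, Finset.prod_mul_distrib,
    Finset.prod_const, Finset.card_univ, Fintype.card_fin, ← AddChar.map_sum_eq_prod,
    ← AddChar.map_sum_eq_prod, hsum]
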